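/- If the pseudo-inertia J = [[Σ, h], [hᵀ, m]] is positive definite, then m > 0, Σ is positive definite, and the recovered rotational inertia Ī = Tr(Σ)·I − Σ satisfies: all eigenvalues of Ī are positive and satisfy the strict triangle inequalities after shifting to the center of mass, i.e., Ī_C = Ī − (1/m)(‖h‖²I − h hᵀ) has eigenvalues D₁, D₂, D₃ with Dᵢ > 0 and Dⱼ + Dₖ > Dᵢ. -/

import Mathlib

/-!
The Schur complement of the mass entry, `B = Σ - m⁻¹ h hᵀ`, is positive definite, and the
center-of-mass inertia is `Ī_C = tr(B) • 1 - B`. Since `tr(B) • 1 - Ī_C = B ≻ 0`, every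
eigenvalue of `Ī_C` lies below `tr B`, while in dimension three the eigenvalues of `Ī_C` sum to
`3 tr B - tr B = 2 tr B`. Hence `Dⱼ + Dₖ = 2 tr B - Dᵢ > Dᵢ`, and `Dᵢ = 2 tr B - Dⱼ - Dₖ > 0`.
-/

open Matrix

theorem Fin.sum_univ_three_of_ne {M : Type*} [AddCommMonoid M] (f : Fin 3 → M)
    {i j k : Fin 3} (hij : i ≠ j) (hjk : j ≠ k) (hik : i ≠ k) :
    ∑ l, f l = f i + f j + f k := by
  fin_cases i <;> fin_cases j <;> fin_cases k <;> simp_all [Fin.sum_univ_three] <;> abel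

namespace Matrix

section SchurComplement

variable {n p K : Type*} [Fintype n] [Fintype p] [DecidableEq p]
  [Field K] [PartialOrder K] [StarRing K]

theorem PosDef.schur_complement₂₂ {A : Matrix n n K} {B : Matrix n p K} {D : Matrix p p K}
    (hM : (fromBlocks A B Bᴴ D).PosDef) : (A - B * D⁻¹ * Bᴴ).PosDef := by
  have hD : D.PosDef := by
    convert hM.submatrix Sum.inr_injective
    ext
    simp
  let := hD.isUnit.invertible
  -- completing the square with `y = -D⁻¹ Bᴴ x` leaves only the Schur complement term
  refine .of_dotProduct_mulVec_pos ((IsHermitian.fromBlocks₂₂ A B hD.1).mp hM.1) fun x hx => ?_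
  have hxy : x ⊕ᵥ (-((D⁻¹ * Bᴴ) *ᵥ x)) ≠ 0 := fun h0 =>
    hx (by simpa using congr_arg (· ∘ Sum.inl) h0)
  have := hM.dotProduct_mulVec_pos hxy
  rwa [dotProduct_mulVec, schur_complement_eq₂₂ A B _ _ hD.1, add_neg_cancel, star_zero,
    zero_vecMul, zero_dotProduct, zero_add, ← dotProduct_mulVec] at this

theorem PosDef.sub_inv_smul_vecMulVec {S : Matrix n n K} {h : n → K} {m : K}
    (hJ : (fromBlocks S (replicateCol (Fin 1) h) (replicateRow (Fin 1) (star h))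
      (of fun _ _ => m)).PosDef) :
    (S - m⁻¹ • vecMulVec h (star h)).PosDef := by
  rw [← conjTranspose_replicateCol] at hJ
  convert hJ.schur_complement₂₂ using 2
  ext i j
  simp only [smul_apply, vecMulVec_apply, Pi.star_apply, smul_eq_mul, inv_subsingleton, of_apply,
    Ring.inverse_eq_inv', conjTranspose_replicateCol, mul_apply, Finset.univ_unique,
    replicateCol_apply, Finset.sum_singleton, replicateRow_apply, diagonal_apply_eq]
  ring

end SchurComplement

section Eigenvalues

open scoped ComplexOrder

variable {n 𝕜 : Type*} [Fintype n] [DecidableEq n] [RCLike 𝕜]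

theorem IsHermitian.eigenvalues_lt_of_posDef_smul_one_sub {M : Matrix n n 𝕜}
    (hM : M.IsHermitian) {t : ℝ} (hpos : (t • 1 - M).PosDef) (i : n) :
    hM.eigenvalues i < t := by
  set v : n → 𝕜 := ⇑(hM.eigenvectorBasis i)
  have hv : v ≠ 0 := fun h0 =>
    hM.eigenvectorBasis.orthonormal.ne_zero i (by ext j; exact congr_fun h0 j)
  have hMv : (t • 1 - M) *ᵥ v = ((t - hM.eigenvalues i : ℝ) : 𝕜) • v := by
    rw [sub_mulVec, smul_mulVec, one_mulVec, hM.mulVec_eigenvectorBasis, RCLike.ofReal_sub,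
      sub_smul, RCLike.real_smul_eq_coe_smul (K := 𝕜), RCLike.real_smul_eq_coe_smul (K := 𝕜)]
  have hquad := hpos.dotProduct_mulVec_pos hv
  rw [hMv, dotProduct_smul, smul_eq_mul] at hquad
  exact sub_pos.mp <| RCLike.ofReal_pos.mp <|
    pos_of_mul_pos_left hquad (dotProduct_star_self_nonneg v)

end Eigenvalues

theorem PosDef.eigenvalues_trace_smul_one_sub {A : Matrix (Fin 3) (Fin 3) ℝ} (hA : A.PosDef)
    (hM : (A.trace • 1 - A).IsHermitian) :
    (∀ i, 0 < hM.eigenvalues i) ∧ ∀ i j k, i ≠ j → j ≠ k → i ≠ k →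
      hM.eigenvalues j + hM.eigenvalues k > hM.eigenvalues i := by
  have hlt : ∀ i, hM.eigenvalues i < A.trace :=
    hM.eigenvalues_lt_of_posDef_smul_one_sub (by rwa [sub_sub_cancel])
  have hsum : ∑ i, hM.eigenvalues i = 2 * A.trace := by
    have := hM.trace_eq_sum_eigenvalues
    simp only [trace_sub, trace_smul, trace_one, Fintype.card_fin, RCLike.ofReal_real_eq_id, id,
      smul_eq_mul, Nat.cast_ofNat] at this
    linarith
  have hsum_of_ne {i j k : Fin 3} (hij : i ≠ j) (hjk : j ≠ k) (hik : i ≠ k) :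
      hM.eigenvalues i + hM.eigenvalues j + hM.eigenvalues k = 2 * A.trace := by
    rw [← hsum, Fin.sum_univ_three_of_ne _ hij hjk hik]
  refine ⟨fun i => ?_, fun i j k hij hjk hik => by linarith [hsum_of_ne hij hjk hik, hlt i]⟩
  obtain ⟨j, k, hij, hjk, hik⟩ : ∃ j k : Fin 3, i ≠ j ∧ j ≠ k ∧ i ≠ k := by
    fin_cases i <;> decide
  linarith [hsum_of_ne hij hjk hik, hlt j, hlt k]

end Matrix

theorem pseudo_inertia_posDef_consequences_general (S : Matrix (Fin 3) (Fin 3) ℝ)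
    (h : Fin 3 → ℝ) (m : ℝ)
    (hJ : (Matrix.fromBlocks S (fun i (_ : Fin 1) => h i) (fun (_ : Fin 1) j => h j)
      (fun _ _ => m)).PosDef) :
    0 < m ∧ S.PosDef ∧
      ∃ hH : ((S.trace • (1 : Matrix (Fin 3) (Fin 3) ℝ) - S) -
          (1 / m) • ((h ⬝ᵥ h) • (1 : Matrix (Fin 3) (Fin 3) ℝ) - vecMulVec h h)).IsHermitian,
        (∀ i : Fin 3, 0 < hH.eigenvalues i) ∧
        ∀ i j k : Fin 3, i ≠ j → j ≠ k → i ≠ k →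
          hH.eigenvalues j + hH.eigenvalues k > hH.eigenvalues i := by
  have hm : 0 < m := hJ.diag_pos (i := Sum.inr 0)
  have hS : S.PosDef := hJ.submatrix Sum.inl_injective
  have hB : (S - m⁻¹ • vecMulVec h h).PosDef := hJ.sub_inv_smul_vecMulVec
  have hIC : (S.trace • (1 : Matrix (Fin 3) (Fin 3) ℝ) - S) -
      (1 / m) • ((h ⬝ᵥ h) • (1 : Matrix (Fin 3) (Fin 3) ℝ) - vecMulVec h h) =
      (S - m⁻¹ • vecMulVec h h).trace • 1 - (S - m⁻¹ • vecMulVec h h) := by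
    rw [trace_sub, trace_smul, trace_vecMulVec]
    module
  rw [hIC]
  exact ⟨hm, hS, _, hB.eigenvalues_trace_smul_one_sub <|
    (isHermitian_one.smul (IsSelfAdjoint.all _)).sub hB.1⟩

/-- If the pseudo-inertia `J = [[Σ, h], [hᵀ, m]]` is positive definite, then `m > 0`,
`Σ` is positive definite, and the center-of-mass inertia
`Ī_C = (Tr(Σ)·I − Σ) − (1/m)(‖h‖² I − h hᵀ)` has eigenvalues `D₁, D₂, D₃` with
`Dᵢ > 0` and `Dⱼ + Dₖ > Dᵢ` for distinct indices. -/
theorem pseudo_inertia_posDef_consequences (S : Matrix (Fin 3) (Fin 3) ℝ)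
    (h : Fin 3 → ℝ) (m : ℝ) (hS : S.IsSymm)
    (hJ : (Matrix.fromBlocks S (fun i (_ : Fin 1) => h i) (fun (_ : Fin 1) j => h j)
      (fun _ _ => m)).PosDef) :
    0 < m ∧ S.PosDef ∧
      ∃ hH : ((S.trace • (1 : Matrix (Fin 3) (Fin 3) ℝ) - S) -
          (1 / m) • ((h ⬝ᵥ h) • (1 : Matrix (Fin 3) (Fin 3) ℝ) - vecMulVec h h)).IsHermitian,
        (∀ i : Fin 3, 0 < hH.eigenvalues i) ∧
        ∀ i j k : Fin 3, i ≠ j → j ≠ k → i ≠ k →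
          hH.eigenvalues j + hH.eigenvalues k > hH.eigenvalues i :=
  pseudo_inertia_posDef_consequences_general S h m hJ
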